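/- Let Ω be an open subset of ℝⁿ, and w : (0,∞) → (0,∞) with inf_{r>0} w(r) > 0 and sup_{r>0} w(r) < ∞. Then the vanishing generalized Morrey space M_∞^{w,0}(Ω) equals {0}: every f ∈ M_∞^w(Ω) with lim_{ρ→0} |f|_{ρ,w,∞,Ω} = 0 is zero almost everywhere in Ω. -/

import Mathlib

/-! Since `w ≥ η := inf w > 0`, each ball-wise bound in the Morrey quantity at scale `ρ` bounds
`η ‖f‖_{L^∞(B(x,r) ∩ Ω)}` for some `r < ρ`, and countably many such balls cover `Ω`. Hence
`η ‖f‖_{L^∞(Ω)} ≤ |f|_{ρ,w,∞,Ω}` for every `ρ > 0`, and letting `ρ → 0` gives `‖f‖_{L^∞(Ω)} = 0`. -/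

open MeasureTheory Metric Set Filter ENNReal

/-- The (generalized) Morrey quantity `|f|_{ρ,w,p,Ω}`:
`sup_{(x,r) ∈ Ω × (0,ρ)} w(r) ‖f‖_{L^p(B(x,r) ∩ Ω)}`, valued in `ℝ≥0∞`. -/
noncomputable def morreyNorm {n : ℕ} (Ω : Set (EuclideanSpace ℝ (Fin n)))
    (p : ℝ≥0∞) (w : ℝ → ℝ) (ρ : ℝ≥0∞) (f : EuclideanSpace ℝ (Fin n) → ℝ) : ℝ≥0∞ :=
  ⨆ x ∈ Ω, ⨆ r ∈ {r : ℝ | 0 < r ∧ ENNReal.ofReal r < ρ},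
    ENNReal.ofReal (w r) * eLpNorm f p (volume.restrict (ball x r ∩ Ω))

open Topology

theorem ae_restrict_of_forall_mem_nhdsWithin {α : Type*} [MeasurableSpace α]
    [TopologicalSpace α] [SecondCountableTopology α] {μ : Measure α} {s : Set α} {p : α → Prop}
    (h : ∀ x ∈ s, ∃ t ∈ 𝓝[s] x, ∀ᵐ y ∂μ.restrict t, p y) : ∀ᵐ y ∂μ.restrict s, p y := by
  choose! t ht hp using h
  obtain ⟨c, hcs, hc, hsc⟩ := TopologicalSpace.countable_cover_nhdsWithin ht
  exact ae_restrict_of_ae_restrict_of_subset hsc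
    ((ae_restrict_biUnion_iff t hc p).2 fun x hx => hp x (hcs hx))

/-- In `ℝ` an unbounded-below infimum is `0`, so a positive one is a lower bound. -/
theorem Real.ciInf_le_of_pos {ι : Type*} {w : ι → ℝ} (h : 0 < ⨅ i, w i) (i : ι) :
    ⨅ i, w i ≤ w i := by
  refine ciInf_le ?_ i
  by_contra hw
  rw [Real.iInf_of_not_bddBelow hw] at h
  exact lt_irrefl 0 h

section Morrey

variable {n : ℕ} {Ω : Set (EuclideanSpace ℝ (Fin n))} {w : ℝ → ℝ}

theorem le_morreyNorm {p ρ : ℝ≥0∞} {f : EuclideanSpace ℝ (Fin n) → ℝ}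
    {x : EuclideanSpace ℝ (Fin n)} (hx : x ∈ Ω) {r : ℝ} (hr : 0 < r) (hrρ : ENNReal.ofReal r < ρ) :
    ENNReal.ofReal (w r) * eLpNorm f p (volume.restrict (ball x r ∩ Ω)) ≤ morreyNorm Ω p w ρ f :=
  le_iSup₂_of_le x hx <| le_iSup₂_of_le r ⟨hr, hrρ⟩ le_rfl

theorem ofReal_mul_eLpNorm_top_le_morreyNorm {η : ℝ} (hη : ∀ r > 0, η ≤ w r) {ρ : ℝ≥0∞}
    (hρ : 0 < ρ) (f : EuclideanSpace ℝ (Fin n) → ℝ) :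
    ENNReal.ofReal η * eLpNorm f ⊤ (volume.restrict Ω) ≤ morreyNorm Ω ⊤ w ρ f := by
  obtain ⟨r, -, hr, hrρ⟩ := ENNReal.lt_iff_exists_real_btwn.1 hρ
  rw [ENNReal.ofReal_pos] at hr
  have hlocal : ∀ x ∈ Ω, ∃ t ∈ 𝓝[Ω] x, ∀ᵐ y ∂volume.restrict t,
      ENNReal.ofReal η * ‖f y‖ₑ ≤ morreyNorm Ω ⊤ w ρ f := by
    refine fun x hx => ⟨ball x r ∩ Ω,
      inter_mem (mem_nhdsWithin_of_mem_nhds (ball_mem_nhds x hr)) self_mem_nhdsWithin, ?_⟩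
    filter_upwards [ae_le_eLpNormEssSup (f := f)] with y hy
    calc ENNReal.ofReal η * ‖f y‖ₑ
        ≤ ENNReal.ofReal (w r) * eLpNorm f ⊤ (volume.restrict (ball x r ∩ Ω)) := by
          rw [eLpNorm_exponent_top]
          gcongr
          exact hη r hr
      _ ≤ morreyNorm Ω ⊤ w ρ f := le_morreyNorm hx hr hrρ
  rw [eLpNorm_exponent_top, eLpNormEssSup_eq_essSup_enorm, ← ENNReal.essSup_const_mul]
  exact essSup_le_of_ae_le _ (ae_restrict_of_forall_mem_nhdsWithin hlocal)

end Morrey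

theorem stmt10_general (n : ℕ) (Ω : Set (EuclideanSpace ℝ (Fin n)))
    (w : ℝ → ℝ)
    (hη : 0 < ⨅ r : Set.Ioi (0:ℝ), w r) :
    ∀ f : EuclideanSpace ℝ (Fin n) → ℝ, Measurable f →
      morreyNorm Ω ⊤ w ⊤ f < ⊤ →
      Filter.Tendsto (fun ρ : ℝ => morreyNorm Ω ⊤ w (ENNReal.ofReal ρ) f)
        (nhdsWithin 0 (Set.Ioi 0)) (nhds 0) →
      f =ᵐ[volume.restrict Ω] 0 := by
  intro f _ _ htend
  set η := ⨅ r : Set.Ioi (0:ℝ), w r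
  have hηw : ∀ r > 0, η ≤ w r := fun r hr => Real.ciInf_le_of_pos hη ⟨r, hr⟩
  have hbound : ∀ᶠ ρ in 𝓝[>] (0:ℝ),
      ENNReal.ofReal η * eLpNorm f ⊤ (volume.restrict Ω) ≤ morreyNorm Ω ⊤ w (ENNReal.ofReal ρ) f :=
    eventually_nhdsWithin_of_forall fun ρ hρ =>
      ofReal_mul_eLpNorm_top_le_morreyNorm hηw (ENNReal.ofReal_pos.2 hρ) f
  have hzero := nonpos_iff_eq_zero.1 (ge_of_tendsto htend hbound)
  rw [mul_eq_zero, ENNReal.ofReal_eq_zero, eLpNorm_exponent_top,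
    eLpNormEssSup_eq_zero_iff] at hzero
  exact hzero.resolve_left hη.not_ge

/-- If `0 < inf w` and `sup w < ∞`, then the vanishing space `M_∞^{w,0}(Ω)` is trivial. -/
theorem stmt10 (n : ℕ) (Ω : Set (EuclideanSpace ℝ (Fin n))) (hΩ : IsOpen Ω)
    (w : ℝ → ℝ) (hw : ∀ r > (0:ℝ), 0 < w r)
    (hη : 0 < ⨅ r : Set.Ioi (0:ℝ), w r) (hbdd : BddAbove (w '' Set.Ioi 0)) :
    ∀ f : EuclideanSpace ℝ (Fin n) → ℝ, Measurable f →
      morreyNorm Ω ⊤ w ⊤ f < ⊤ →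
      Filter.Tendsto (fun ρ : ℝ => morreyNorm Ω ⊤ w (ENNReal.ofReal ρ) f)
        (nhdsWithin 0 (Set.Ioi 0)) (nhds 0) →
      f =ᵐ[volume.restrict Ω] 0 :=
  stmt10_general n Ω w hη
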